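/- arXiv:2307.07711 — 4 statements merged into one kernel-verified Lean document; each statement's English description precedes it below -/
import Mathlib

section
/- For any subset S of vertices of a finite graph and any initial configuration, any maximal sequence of firings restricted to vertices in S (i.e., repeatedly firing full vertices in S until no vertex of S is full) that terminates reaches the same final configuration, and moreover fires each vertex the same number of times, independently of the order of firings. -/
open scoped Classical

variable {V : Type} [Fintype V] [DecidableEq V]

noncomputable def fire (G : SimpleGraph V) (σ : V → ℕ) (u : V) : V → ℕ :=
  fun w => if w = u then σ u - G.degree u else if G.Adj u w then σ w + 1 else σ w

noncomputable def fireList (G : SimpleGraph V) : (V → ℕ) → List V → (V → ℕ)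
  | σ, [] => σ
  | σ, v :: l => fireList G (fire G σ v) l

/-- A firing sequence is valid if each vertex is full at the moment it is fired. -/
def ValidSeq (G : SimpleGraph V) : (V → ℕ) → List V → Prop
  | _, [] => True
  | σ, v :: l => G.degree v ≤ σ v ∧ ValidSeq G (fire G σ v) l

/-- No vertex of `S` is full. -/
def LocalTerminal (G : SimpleGraph V) (σ : V → ℕ) (S : Set V) : Prop :=
  ∀ v ∈ S, σ v < G.degree v

lemma fire_le (G : SimpleGraph V) (σ : V → ℕ) (u w : V) (h : w ≠ u) :
    σ w ≤ fire G σ u w := by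
  unfold fire
  simp only [if_neg h]
  split_ifs <;> omega

lemma fireList_le (G : SimpleGraph V) (v : V) :
    ∀ (l : List V) (σ : V → ℕ), v ∉ l → σ v ≤ fireList G σ l v := by
  intro l
  induction l with
  | nil => intro σ _; exact le_refl _
  | cons w l ih =>
      intro σ hv
      have hvw : v ≠ w := fun h => hv (h ▸ List.mem_cons_self (a := w) (l := l))
      calc σ v ≤ fire G σ w v := fire_le G σ w v hvw
        _ ≤ fireList G (fire G σ w) l v := ih _ (fun h => hv (List.mem_cons_of_mem _ h))

lemma fire_comm (G : SimpleGraph V) (σ : V → ℕ) (u w : V) (huw : u ≠ w)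
    (hu : G.degree u ≤ σ u) (hw : G.degree w ≤ σ w) :
    fire G (fire G σ u) w = fire G (fire G σ w) u := by
  funext x
  unfold fire
  by_cases hx : x = u
  · subst hx
    simp only [if_neg huw.symm, if_pos rfl, if_neg huw]
    rw [G.adj_comm]
    split_ifs <;> omega
  · by_cases hx' : x = w
    · subst hx'
      simp only [if_neg hx, if_pos rfl, if_neg (fun h : x = u => hx h)]
      rw [G.adj_comm]
      split_ifs <;> omega
    · simp only [if_neg hx, if_neg hx']
      split_ifs <;> omega

lemma move_front (G : SimpleGraph V) :
    ∀ (l : List V) (σ : V → ℕ) (v : V), v ∈ l → G.degree v ≤ σ v → ValidSeq G σ l →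
      ValidSeq G σ (v :: l.erase v) ∧ fireList G σ l = fireList G σ (v :: l.erase v) := by
  intro l
  induction l with
  | nil => intro σ v hv; exact absurd hv (List.not_mem_nil (a := v))
  | cons w l ih =>
      intro σ v hv hfull hval
      by_cases hw : w = v
      · subst hw
        rw [List.erase_cons_head]
        exact ⟨hval, rfl⟩
      · have hv' : v ∈ l := by
          rcases List.mem_cons.mp hv with h | h
          · exact absurd h.symm hw
          · exact h
        have hvw : v ≠ w := fun h => hw h.symm
        have hfull' : G.degree v ≤ fire G σ w v :=
          le_trans hfull (fire_le G σ w v hvw)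
        obtain ⟨V', E'⟩ := ih (fire G σ w) v hv' hfull' hval.2
        rw [List.erase_cons_tail (by simpa using hw)]
        have hcomm : fire G (fire G σ v) w = fire G (fire G σ w) v :=
          fire_comm G σ v w hvw hfull hval.1
        constructor
        · refine ⟨hfull, ?_, ?_⟩
          · exact le_trans hval.1 (fire_le G σ v w hw)
          · rw [hcomm]; exact V'.2
        · show fireList G (fire G σ w) l = fireList G (fire G (fire G σ v) w) (l.erase v)
          rw [hcomm]
          exact E'

/-- Any two maximal firing sequences restricted to vertices of `S` that terminate
reach the same configuration and fire each vertex the same number of times. -/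
theorem local_abelian (G : SimpleGraph V) (S : Set V) (σ : V → ℕ) (l₁ l₂ : List V)
    (h1S : ∀ v ∈ l₁, v ∈ S) (h2S : ∀ v ∈ l₂, v ∈ S)
    (h1 : ValidSeq G σ l₁) (h2 : ValidSeq G σ l₂)
    (t1 : LocalTerminal G (fireList G σ l₁) S)
    (t2 : LocalTerminal G (fireList G σ l₂) S) :
    fireList G σ l₁ = fireList G σ l₂ ∧ ∀ v, l₁.count v = l₂.count v := by
  induction l₁ generalizing σ l₂ with
  | nil =>
      cases l₂ with
      | nil => exact ⟨rfl, fun v => rfl⟩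
      | cons w l =>
          exact absurd h2.1 (not_le.2 (t1 w (h2S w (List.mem_cons_self (a := w) (l := l)))))
  | cons v l₁' ih =>
      have hvS : v ∈ S := h1S v (List.mem_cons_self (a := v) (l := l₁'))
      have hfull : G.degree v ≤ σ v := h1.1
      have hmem : v ∈ l₂ := by
        by_contra hc
        have := fireList_le G v l₂ σ hc
        exact absurd (t2 v hvS) (not_lt.2 (le_trans hfull this))
      obtain ⟨V2, E2⟩ := move_front G l₂ σ v hmem hfull h2
      have t2' : LocalTerminal G (fireList G (fire G σ v) (l₂.erase v)) S := by
        rw [E2] at t2; exact t2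
      obtain ⟨Ecfg, Hcount⟩ := ih (fire G σ v) (l₂.erase v)
        (fun u hu => h1S u (List.mem_cons_of_mem _ hu))
        (fun u hu => h2S u (List.mem_of_mem_erase hu))
        h1.2 V2.2 t1 t2'
      constructor
      · show fireList G (fire G σ v) l₁' = fireList G σ l₂
        rw [Ecfg, E2]
        rfl
      · intro u
        have hperm : l₂.Perm (v :: l₂.erase v) := List.perm_cons_erase hmem
        rw [hperm.count_eq]
        simp only [List.count_cons]
        rw [Hcount u]
end

section
/- The firing vector of a terminal sandpile instance is the pointwise-minimum non-negative integer solution of the system of strict inequalities (Σ_{v ∈ N(u)} f(v)) − f(u)·degree(u) + σ(u) < degree(u) for all vertices u; moreover, if no feasible solution exists, the instance is recurrent (Least Action Principle). -/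
open scoped Classical

variable {V : Type} [Fintype V] [DecidableEq V]

/-- `f` is a feasible solution of the system
`Σ_{v ∈ N(u)} f(v) − f(u)·degree(u) + σ(u) < degree(u)` for all `u`. -/
noncomputable def Feasible (G : SimpleGraph V) (σ : V → ℕ) (f : V → ℕ) : Prop :=
  ∀ u : V, (∑ v ∈ G.neighborFinset u, (f v : ℤ)) - (f u : ℤ) * G.degree u + σ u <
    (G.degree u : ℤ)

lemma validSeq_append (G : SimpleGraph V) (l : List V) (u : V) :
    ∀ σ, ValidSeq G σ (l ++ [u]) →
      ValidSeq G σ l ∧ G.degree u ≤ fireList G σ l u := by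
  induction l with
  | nil => intro σ h; exact ⟨trivial, h.1⟩
  | cons v l ih =>
    intro σ h
    obtain ⟨h1, h2⟩ := h
    obtain ⟨h3, h4⟩ := ih _ h2
    exact ⟨⟨h1, h3⟩, h4⟩

lemma fireList_count (G : SimpleGraph V) (l : List V) :
    ∀ σ, ValidSeq G σ l → ∀ u,
      (fireList G σ l u : ℤ) =
        σ u + (∑ v ∈ G.neighborFinset u, (l.count v : ℤ)) - l.count u * G.degree u := by
  induction l with
  | nil => intro σ _ u; simp [fireList]
  | cons v l ih =>
    intro σ hv u
    obtain ⟨h1, h2⟩ := hv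
    have IH := ih (fire G σ v) h2 u
    have hcount : ∀ w : V, ((v :: l).count w : ℤ) = l.count w + if w = v then 1 else 0 := by
      intro w
      simp [List.count_cons]
      rcases eq_or_ne w v with hw | hw
      · simp [hw]
      · simp [hw, Ne.symm hw]
    have hsum : (∑ w ∈ G.neighborFinset u, ((v :: l).count w : ℤ))
        = (∑ w ∈ G.neighborFinset u, (l.count w : ℤ)) + (if G.Adj u v then 1 else 0) := by
      simp only [hcount, Finset.sum_add_distrib]
      congr 1
      rw [Finset.sum_ite_eq' (G.neighborFinset u) v (fun _ => (1 : ℤ))]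
      simp [SimpleGraph.mem_neighborFinset]
    have hfire : (fire G σ v u : ℤ) =
        σ u + (if G.Adj u v then 1 else 0) - (if u = v then 1 else 0) * G.degree u := by
      by_cases huv : u = v
      · subst huv
        simp [fire, SimpleGraph.irrefl]
        push_cast [Nat.cast_sub h1]
        ring
      · simp only [fire, if_neg huv]
        have : G.Adj v u ↔ G.Adj u v := G.adj_comm v u
        by_cases ha : G.Adj u v
        · simp [this, ha, huv]
        · simp [this, ha, huv]
    rw [fireList] at *
    rw [IH, hfire, hsum, hcount u]
    ring

lemma count_le_feasible (G : SimpleGraph V) (σ : V → ℕ) (f : V → ℕ)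
    (hf : Feasible G σ f) :
    ∀ l : List V, ValidSeq G σ l → ∀ v, l.count v ≤ f v := by
  intro l
  induction l using List.reverseRecOn with
  | nil => simp
  | append_singleton l u ih =>
    intro hv v
    obtain ⟨hvl, hdeg⟩ := validSeq_append G l u σ hv
    have ihc := ih hvl
    rw [List.count_append]
    by_cases hvu : v = u
    · subst hvu
      simp only [List.count_singleton]
      simp
      by_contra hlt
      push_neg at hlt
      have hcv : l.count v = f v := le_antisymm (ihc v) (by omega)
      have key := fireList_count G l σ hvl v
      have hsum : (∑ w ∈ G.neighborFinset v, (l.count w : ℤ))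
          ≤ ∑ w ∈ G.neighborFinset v, (f w : ℤ) := by
        apply Finset.sum_le_sum
        intro w _
        exact_mod_cast ihc w
      have hF := hf v
      have hdeg' : (G.degree v : ℤ) ≤ (fireList G σ l v : ℤ) := by exact_mod_cast hdeg
      rw [key, hcv] at hdeg'
      linarith
    · have : List.count v [u] = 0 := by simp [List.count_singleton, hvu, Ne.symm hvu]
      rw [this]
      simpa using ihc v

/-- Least Action Principle: the firing vector of any stabilizing sequence is a
feasible solution, and is pointwise minimal among feasible solutions; moreover if no
feasible solution exists, the instance does not terminate. -/
theorem least_action_principle (G : SimpleGraph V) (hconn : G.Connected) (σ : V → ℕ) :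
    (∀ l : List V, ValidSeq G σ l → (∀ v, fireList G σ l v < G.degree v) →
      Feasible G σ (fun v => l.count v) ∧
        ∀ f : V → ℕ, Feasible G σ f → ∀ v, l.count v ≤ f v) ∧
    ((¬ ∃ f : V → ℕ, Feasible G σ f) →
      ¬ ∃ l : List V, ValidSeq G σ l ∧ ∀ v, fireList G σ l v < G.degree v) := by
  constructor
  · intro l hv hterm
    constructor
    · intro u
      have key := fireList_count G l σ hv u
      have ht : (fireList G σ l u : ℤ) < G.degree u := by exact_mod_cast hterm u
      rw [key] at ht
      simpa using by linarith
    · intro f hf v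
      exact count_le_feasible G σ f hf l hv v
  · rintro hne ⟨l, hv, ht⟩
    refine hne ⟨fun v => l.count v, ?_⟩
    intro u
    have key := fireList_count G l σ hv u
    have h2 : (fireList G σ l u : ℤ) < G.degree u := by exact_mod_cast ht u
    rw [key] at h2
    simpa using by linarith
end

section
/- On a clique with n vertices, a sandpile instance terminates if and only if the total number of firings to reach the terminal configuration is at most n − 2; equivalently, any firing sequence of length at least n − 1 cannot end in a terminal configuration. -/
open scoped Classical

variable {V : Type} [Fintype V] [DecidableEq V]

lemma fireList_append (G : SimpleGraph V) (σ : V → ℕ) (l₁ l₂ : List V) :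
    fireList G σ (l₁ ++ l₂) = fireList G (fireList G σ l₁) l₂ := by
  induction l₁ generalizing σ with
  | nil => rfl
  | cons a t ih => simp [fireList, ih]

lemma fireList_not_mem (σ : V → ℕ) (l : List V) (v : V) (hv : v ∉ l) :
    fireList (⊤ : SimpleGraph V) σ l v = σ v + l.length := by
  induction l generalizing σ with
  | nil => rfl
  | cons a t ih =>
    have hva : v ≠ a := fun h => hv (h ▸ (List.mem_cons_self : a ∈ a :: t))
    have hvt : v ∉ t := fun h => hv (List.mem_cons_of_mem a h)
    have : fire (⊤ : SimpleGraph V) σ a v = σ v + 1 := by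
      simp [fire, hva, (SimpleGraph.top_adj a v).mpr (Ne.symm hva)]
    simp [fireList, ih _ hvt, this, List.length_cons]
    ring

/-- On a clique on `n ≥ 2` vertices, a sandpile instance terminates iff it does so
within at most `n − 2` firings; equivalently, no valid firing sequence of length
`≥ n − 1` can end in a terminal configuration. -/
theorem clique_firing_bound (hn : 2 ≤ Fintype.card V) (σ : V → ℕ) :
    ((∃ l : List V, ValidSeq (⊤ : SimpleGraph V) σ l ∧
        ∀ v, fireList (⊤ : SimpleGraph V) σ l v < (⊤ : SimpleGraph V).degree v) ↔
      (∃ l : List V, ValidSeq (⊤ : SimpleGraph V) σ l ∧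
        (∀ v, fireList (⊤ : SimpleGraph V) σ l v < (⊤ : SimpleGraph V).degree v) ∧
        l.length ≤ Fintype.card V - 2)) ∧
    (∀ l : List V, ValidSeq (⊤ : SimpleGraph V) σ l →
      (∀ v, fireList (⊤ : SimpleGraph V) σ l v < (⊤ : SimpleGraph V).degree v) →
      l.length ≤ Fintype.card V - 2) := by
  have key : ∀ l : List V, ValidSeq (⊤ : SimpleGraph V) σ l →
      (∀ v, fireList (⊤ : SimpleGraph V) σ l v < (⊤ : SimpleGraph V).degree v) →
      l.length ≤ Fintype.card V - 2 := by
    intro l _ hterm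
    by_contra hlen
    push_neg at hlen
    have hlen' : Fintype.card V - 1 ≤ l.length := by omega
    set m := l.length - (Fintype.card V - 1) with hm
    have hsplit : l = l.take m ++ l.drop m := (List.take_append_drop m l).symm
    have hdlen : (l.drop m).length = Fintype.card V - 1 := by
      rw [List.length_drop]; omega
    -- find a vertex not in the last n-1 firings
    have hcard : (l.drop m).toFinset.card < Fintype.card V := by
      calc (l.drop m).toFinset.card ≤ (l.drop m).length := List.toFinset_card_le _
        _ = Fintype.card V - 1 := hdlen
        _ < Fintype.card V := by omega
    obtain ⟨v, hv⟩ : ∃ v, v ∉ (l.drop m).toFinset := by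
      by_contra h
      push_neg at h
      have : (l.drop m).toFinset = Finset.univ := Finset.eq_univ_of_forall h
      rw [this, Finset.card_univ] at hcard
      omega
    rw [List.mem_toFinset] at hv
    have hterm_v := hterm v
    rw [hsplit, fireList_append, fireList_not_mem _ _ _ hv, hdlen] at hterm_v
    have hdeg : (⊤ : SimpleGraph V).degree v = Fintype.card V - 1 := by
      simp [SimpleGraph.complete_graph_degree]
    omega
  refine ⟨⟨fun ⟨l, hval, hterm⟩ => ⟨l, hval, hterm, key l hval hterm⟩,
      fun ⟨l, hval, hterm, _⟩ => ⟨l, hval, hterm⟩⟩, key⟩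
end

section
/- For a sandpile instance with a non-empty set of sinks on a finite connected graph, the firing number of every non-sink vertex is bounded by O(|M|^4 · (‖σ‖₁ + n)^4); concretely, it is at most (n + |M|·(‖σ‖₁ + n))^4, assuming the firing number on a sink-free connected graph of N vertices is bounded by N^4. -/
open scoped Classical

variable {V : Type} [Fintype V] [DecidableEq V]

/-- The auxiliary sink-free graph: attach `A` pendant vertices to each sink in `M`. -/
def auxG (G : SimpleGraph V) (M : Finset V) (A : ℕ) :
    SimpleGraph (V ⊕ (↥M × Fin A)) where
  Adj x y := match x, y with
    | Sum.inl u, Sum.inl v => G.Adj u v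
    | Sum.inl u, Sum.inr p => u = ↑p.1
    | Sum.inr p, Sum.inl v => v = ↑p.1
    | Sum.inr _, Sum.inr _ => False
  symm := by
    constructor; rintro (u | p) (v | q) h
    · exact G.adj_symm h
    · exact h
    · exact h
    · exact h
  loopless := by
    constructor; rintro (u | p) h
    · exact G.loopless.irrefl u h
    · exact h

lemma auxG_adj_inl_inl (G : SimpleGraph V) (M : Finset V) (A : ℕ) (u v : V) :
    (auxG G M A).Adj (Sum.inl u) (Sum.inl v) ↔ G.Adj u v := Iff.rfl

lemma auxG_adj_inl_inr (G : SimpleGraph V) (M : Finset V) (A : ℕ) (u : V) (p : ↥M × Fin A) :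
    (auxG G M A).Adj (Sum.inl u) (Sum.inr p) ↔ u = ↑p.1 := Iff.rfl

lemma auxG_neighborFinset (G : SimpleGraph V) (M : Finset V) (A : ℕ) {u : V} (hu : u ∉ M) :
    (auxG G M A).neighborFinset (Sum.inl u) =
      (G.neighborFinset u).map ⟨Sum.inl, Sum.inl_injective⟩ := by
  ext x
  rcases x with v | p
  · simp [SimpleGraph.mem_neighborFinset, auxG_adj_inl_inl]
  · constructor
    · intro h
      rw [SimpleGraph.mem_neighborFinset, auxG_adj_inl_inr] at h
      exact absurd (h ▸ p.1.2) hu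
    · intro h
      simp at h

lemma auxG_degree_inl (G : SimpleGraph V) (M : Finset V) (A : ℕ) {u : V} (hu : u ∉ M) :
    (auxG G M A).degree (Sum.inl u) = G.degree u := by
  rw [SimpleGraph.degree, auxG_neighborFinset G M A hu, Finset.card_map]
  rfl

lemma auxG_degree_sink (G : SimpleGraph V) (M : Finset V) (A : ℕ) {m : V} (hm : m ∈ M) :
    A ≤ (auxG G M A).degree (Sum.inl m) := by
  have hsub : (Finset.univ.map
      ⟨fun i : Fin A => (Sum.inr (⟨m, hm⟩, i) : V ⊕ (↥M × Fin A)),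
        fun i j h => by simpa using h⟩) ⊆ (auxG G M A).neighborFinset (Sum.inl m) := by
    intro x hx
    simp only [Finset.mem_map, Finset.mem_univ, true_and, Function.Embedding.coeFn_mk] at hx
    obtain ⟨i, rfl⟩ := hx
    rw [SimpleGraph.mem_neighborFinset]
    exact rfl
  calc A = (Finset.univ.map
      ⟨fun i : Fin A => (Sum.inr (⟨m, hm⟩, i) : V ⊕ (↥M × Fin A)),
        fun i j h => by simpa using h⟩).card := by simp
    _ ≤ _ := Finset.card_le_card hsub

lemma auxG_degree_pendant (G : SimpleGraph V) (M : Finset V) (A : ℕ) (p : ↥M × Fin A) :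
    0 < (auxG G M A).degree (Sum.inr p) := by
  rw [SimpleGraph.degree, Finset.card_pos]
  exact ⟨Sum.inl ↑p.1, by rw [SimpleGraph.mem_neighborFinset]; exact rfl⟩

lemma fire_aux (G : SimpleGraph V) (M : Finset V) (A : ℕ) (σ : V → ℕ) {u : V} (hu : u ∉ M) :
    fire (auxG G M A) (Sum.elim σ fun _ => 0) (Sum.inl u)
      = Sum.elim (fire G σ u) fun _ => 0 := by
  funext x
  rcases x with v | p
  · simp only [fire, Sum.elim_inl, auxG_degree_inl G M A hu]
    by_cases h : v = u
    · simp [h]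
    · have h' : (Sum.inl v : V ⊕ (↥M × Fin A)) ≠ Sum.inl u := by simp [h]
      rw [if_neg h', if_neg h]
      by_cases hadj : G.Adj u v
      · have hadj' : (auxG G M A).Adj (Sum.inl u) (Sum.inl v) := hadj
        rw [if_pos hadj', if_pos hadj]
      · have hadj' : ¬ (auxG G M A).Adj (Sum.inl u) (Sum.inl v) := hadj
        rw [if_neg hadj', if_neg hadj]
  · simp only [fire, Sum.elim_inr]
    have h1 : (Sum.inr p : V ⊕ (↥M × Fin A)) ≠ Sum.inl u := by simp
    have h2 : ¬ (auxG G M A).Adj (Sum.inl u) (Sum.inr p) := by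
      rw [auxG_adj_inl_inr]
      rintro rfl
      exact hu p.1.2
    rw [if_neg h1, if_neg h2]

lemma fireList_aux (G : SimpleGraph V) (M : Finset V) (A : ℕ) (σ : V → ℕ) (l : List V)
    (hl : ∀ v ∈ l, v ∉ M) :
    fireList (auxG G M A) (Sum.elim σ fun _ => 0) (l.map Sum.inl)
      = Sum.elim (fireList G σ l) fun _ => 0 := by
  induction l generalizing σ with
  | nil => rfl
  | cons v l ih =>
    simp only [List.map_cons, fireList]
    rw [fire_aux G M A σ (hl v List.mem_cons_self)]
    exact ih _ fun w hw => hl w (List.mem_cons_of_mem v hw)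

lemma valid_aux (G : SimpleGraph V) (M : Finset V) (A : ℕ) (σ : V → ℕ) (l : List V)
    (hl : ∀ v ∈ l, v ∉ M) (hval : ValidSeq G σ l) :
    ValidSeq (auxG G M A) (Sum.elim σ fun _ => 0) (l.map Sum.inl) := by
  induction l generalizing σ with
  | nil => trivial
  | cons v l ih =>
    have hv : v ∉ M := hl v List.mem_cons_self
    refine ⟨?_, ?_⟩
    · rw [auxG_degree_inl G M A hv]
      exact hval.1
    · rw [fire_aux G M A σ hv]
      exact ih _ (fun w hw => hl w (List.mem_cons_of_mem v hw)) hval.2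

lemma sum_fire (G : SimpleGraph V) (σ : V → ℕ) (u : V) (h : G.degree u ≤ σ u) :
    ∑ w, fire G σ u w = ∑ w, σ w := by
  have key : ∀ w, fire G σ u w =
      (if w = u then σ u - G.degree u else σ w) + (if G.Adj u w then 1 else 0) := by
    intro w
    by_cases hw : w = u
    · subst hw
      simp [fire, G.loopless.irrefl w]
    · simp only [fire, if_neg hw]
      by_cases hadj : G.Adj u w <;> simp [hadj]
  rw [Finset.sum_congr rfl fun w _ => key w, Finset.sum_add_distrib]
  have h1 : ∑ w, (if w = u then σ u - G.degree u else σ w)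
      = (σ u - G.degree u) + ∑ w ∈ Finset.univ.erase u, σ w := by
    rw [← Finset.add_sum_erase _ _ (Finset.mem_univ u), if_pos rfl]
    congr 1
    exact Finset.sum_congr rfl fun w hw => if_neg (Finset.mem_erase.mp hw).1
  have h2 : ∑ w, (if G.Adj u w then (1 : ℕ) else 0) = G.degree u := by
    rw [Finset.sum_boole]
    simp [SimpleGraph.degree, SimpleGraph.neighborFinset_eq_filter]
  rw [h1, h2, add_assoc, add_comm (∑ w ∈ Finset.univ.erase u, σ w), ← add_assoc,
    Nat.sub_add_cancel h, Finset.add_sum_erase _ _ (Finset.mem_univ u)]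

lemma sum_fireList (G : SimpleGraph V) (σ : V → ℕ) (l : List V) (hval : ValidSeq G σ l) :
    ∑ w, fireList G σ l w = ∑ w, σ w := by
  induction l generalizing σ with
  | nil => rfl
  | cons v l ih =>
    rw [fireList, ih _ hval.2, sum_fire G σ v hval.1]

lemma auxG_connected (G : SimpleGraph V) (hconn : G.Connected) (M : Finset V) (A : ℕ) :
    (auxG G M A).Connected := by
  have hinl : ∀ u v : V, (auxG G M A).Reachable (Sum.inl u) (Sum.inl v) :=
    fun u v => SimpleGraph.Reachable.map
      (⟨Sum.inl, fun h => h⟩ : G →g auxG G M A) (hconn u v)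
  have hpend : ∀ p : ↥M × Fin A, (auxG G M A).Reachable (Sum.inr p) (Sum.inl ↑p.1) :=
    fun p => SimpleGraph.Adj.reachable (by exact rfl)
  rw [SimpleGraph.connected_iff]
  constructor
  · rintro (u | p) (v | q)
    · exact hinl u v
    · exact ((hpend q).trans (hinl ↑q.1 u)).symm
    · exact (hpend p).trans (hinl ↑p.1 v)
    · exact (hpend p).trans ((hinl ↑p.1 ↑q.1).trans (hpend q).symm)
  · exact ⟨Sum.inl hconn.nonempty.some⟩

/-- For a sandpile instance with a non-empty set of sinks `M` on a connected graph,
assuming Tardos' `N^4` bound for the firing numbers of sink-free connected instances,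
the firing number of every vertex is at most `(n + |M|·(‖σ‖₁ + n))^4`. -/
theorem sink_firing_bound (G : SimpleGraph V) (hconn : G.Connected) (σ : V → ℕ)
    (M : Finset V) (hM : M.Nonempty)
    (hTardos : ∀ (W : Type) [Fintype W] [DecidableEq W] (H : SimpleGraph W),
      H.Connected → ∀ (τ : W → ℕ) (l : List W), ValidSeq H τ l →
        (∀ v, fireList H τ l v < H.degree v) →
        ∀ v, l.count v ≤ (Fintype.card W) ^ 4)
    (l : List V) (hlM : ∀ v ∈ l, v ∉ M) (hval : ValidSeq G σ l)
    (hterm : ∀ v, v ∉ M → fireList G σ l v < G.degree v) :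
    ∀ v : V, l.count v ≤
      (Fintype.card V + M.card * ((∑ w, σ w) + Fintype.card V)) ^ 4 := by
  intro v
  set A : ℕ := (∑ w, σ w) + Fintype.card V with hA
  have hfl : fireList (auxG G M A) (Sum.elim σ fun _ => 0) (l.map Sum.inl)
      = Sum.elim (fireList G σ l) fun _ => 0 := fireList_aux G M A σ l hlM
  have hcardV : 0 < Fintype.card V := by
    have : Nonempty V := hconn.nonempty
    exact Fintype.card_pos
  have hsum : ∑ w, fireList G σ l w = ∑ w, σ w := sum_fireList G σ l hval
  have htermH : ∀ x, fireList (auxG G M A) (Sum.elim σ fun _ => 0) (l.map Sum.inl) x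
      < (auxG G M A).degree x := by
    rintro (u | p)
    · rw [hfl, Sum.elim_inl]
      by_cases hu : u ∈ M
      · calc fireList G σ l u ≤ ∑ w, fireList G σ l w :=
              Finset.single_le_sum (fun w _ => Nat.zero_le _) (Finset.mem_univ u)
          _ = ∑ w, σ w := hsum
          _ < A := by omega
          _ ≤ (auxG G M A).degree (Sum.inl u) := auxG_degree_sink G M A hu
      · rw [auxG_degree_inl G M A hu]
        exact hterm u hu
    · rw [hfl, Sum.elim_inr]
      exact auxG_degree_pendant G M A p
  have hcount := hTardos (V ⊕ (↥M × Fin A)) (auxG G M A) (auxG_connected G hconn M A)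
    (Sum.elim σ fun _ => 0) (l.map Sum.inl)
    (valid_aux G M A σ l hlM hval) htermH (Sum.inl v)
  rw [@List.count_map_of_injective _ _ _ _ instBEqOfDecidableEq _ l Sum.inl Sum.inl_injective] at hcount
  calc l.count v ≤ Fintype.card (V ⊕ (↥M × Fin A)) ^ 4 := hcount
    _ = (Fintype.card V + M.card * A) ^ 4 := by
        simp [Fintype.card_sum, Fintype.card_prod, Fintype.card_coe]
    _ = (Fintype.card V + M.card * ((∑ w, σ w) + Fintype.card V)) ^ 4 := by rw [hA]
end
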